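/- Let T be a tree with diameter 4, let x be the (unique) central vertex of T, and let u, v ∈ N_T(x) with deg_T(u) ≥ 2. Then V(T̄) is contained in the convex hull of {ū, v̄, x̄} in the complementary prism TT̄. -/

import Mathlib

open SimpleGraph

/-- Adjacency of the complementary prism: copies of `G` and `Gᶜ` joined by a perfect matching. -/
def prismAdj {V : Type*} (G : SimpleGraph V) : V ⊕ V → V ⊕ V → Prop
  | Sum.inl a, Sum.inl b => G.Adj a b
  | Sum.inr a, Sum.inr b => Gᶜ.Adj a b
  | Sum.inl a, Sum.inr b => a = b
  | Sum.inr a, Sum.inl b => a = b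

/-- The complementary prism `G G̅` of a graph `G`. -/
def compPrism {V : Type*} (G : SimpleGraph V) : SimpleGraph (V ⊕ V) where
  Adj := prismAdj G
  symm := ⟨by
    rintro (a | a) (b | b) h
    · exact h.symm
    · exact h.symm
    · exact h.symm
    · exact h.symm⟩
  loopless := ⟨by
    rintro (a | a) h
    · exact G.loopless.irrefl a h
    · exact Gᶜ.loopless.irrefl a h⟩

/-- `w` lies on some shortest `u,v`-path (geodesic) of `H`. -/
def inInterval {V : Type*} (H : SimpleGraph V) (u v w : V) : Prop :=
  ∃ p : H.Walk u v, p.IsPath ∧ p.length = H.dist u v ∧ w ∈ p.support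

/-- A set of vertices is geodesically convex. -/
def IsGeoConvex {V : Type*} (H : SimpleGraph V) (S : Set V) : Prop :=
  ∀ u ∈ S, ∀ v ∈ S, ∀ w, inInterval H u v w → w ∈ S

/-- The geodesic convex hull: the smallest convex set containing `S`. -/
def geoHull {V : Type*} (H : SimpleGraph V) (S : Set V) : Set V :=
  ⋂₀ {C | IsGeoConvex H C ∧ S ⊆ C}

/-- The convexity number: maximum cardinality of a proper convex set. -/
noncomputable def convexityNumber {V : Type*} (H : SimpleGraph V) : ℕ :=
  sSup {n | ∃ S : Set V, IsGeoConvex H S ∧ S ≠ Set.univ ∧ S.ncard = n}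

/-- The diameter of a graph. -/
noncomputable def graphDiam {V : Type*} (H : SimpleGraph V) : ℕ :=
  sSup {d | ∃ u v : V, H.dist u v = d}

/-- The eccentricity of a vertex. -/
noncomputable def graphEcc {V : Type*} (H : SimpleGraph V) (u : V) : ℕ :=
  sSup {d | ∃ v : V, H.dist u v = d}

/-- The degree of a vertex. -/
noncomputable def vdeg {V : Type*} (H : SimpleGraph V) (v : V) : ℕ :=
  (H.neighborSet v).ncard

/-- The maximum degree. -/
noncomputable def maxDeg {V : Type*} (H : SimpleGraph V) : ℕ :=
  sSup {d | ∃ v : V, vdeg H v = d}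

/-- The number of pendant neighbours of a vertex. -/
noncomputable def pendCount {V : Type*} (H : SimpleGraph V) (w : V) : ℕ :=
  {v ∈ H.neighborSet w | vdeg H v = 1}.ncard

/-!
For an edge `ab` of `T`, the vertices `ā, b̄` are non-adjacent in `TT̄`, so every `w` adjacent in
`T` to neither `a` nor `b` gives a geodesic `ā w̄ b̄`, and `w̄` lies in the hull of `{ā, b̄}`.
Choose a neighbour `p ≠ x` of `u`; then `p̄` is caught between `x̄` and `v̄`. Since `T` has no
triangles and no two vertices share two neighbours, any other `w̄` is caught between `ū` and `p̄`
if `w` is a neighbour of `x`, between `x̄` and `v̄` if `w` is a neighbour of `u`, and between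
`x̄` and `ū` otherwise.
-/

namespace SimpleGraph

variable {V : Type*} {G : SimpleGraph V}

lemma IsAcyclic.not_adj_of_adj_of_adj (hG : G.IsAcyclic) {a b c : V}
    (hab : G.Adj a b) (hbc : G.Adj b c) : ¬ G.Adj a c := fun hac =>
  hG.dist_ne_of_adj hbc hab.reachable <| by
    rw [dist_eq_one_iff_adj.mpr hab, dist_eq_one_iff_adj.mpr hac]

lemma IsAcyclic.eq_of_adj_of_adj (hG : G.IsAcyclic) {a b c d : V} (hac : a ≠ c)
    (hab : G.Adj a b) (hbc : G.Adj b c) (had : G.Adj a d) (hdc : G.Adj d c) : b = d := by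
  have hpath : ∀ {m : V} (ham : G.Adj a m) (hmc : G.Adj m c),
      (Walk.cons ham (Walk.cons hmc Walk.nil)).IsPath := fun ham hmc => by
    simp [Walk.isPath_def, ham.ne, hmc.ne, hac]
  have h := (hG.subsingleton_path a c).elim ⟨_, hpath hab hbc⟩ ⟨_, hpath had hdc⟩
  simpa using congrArg (fun p : G.Path a c => p.1.snd) h

end SimpleGraph

section GeodesicHull

variable {V : Type*} {H : SimpleGraph V} {S : Set V}

lemma subset_geoHull : S ⊆ geoHull H S := fun _ ha _ hC => hC.2 ha

lemma mem_geoHull_of_inInterval {a b w : V} (ha : a ∈ geoHull H S) (hb : b ∈ geoHull H S)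
    (hw : inInterval H a b w) : w ∈ geoHull H S :=
  fun C hC => hC.1 a (ha C hC) b (hb C hC) w hw

lemma inInterval_of_adj_of_adj {a b m : V} (hab : a ≠ b) (hnadj : ¬ H.Adj a b)
    (ham : H.Adj a m) (hmb : H.Adj m b) : inInterval H a b m := by
  let p : H.Walk a b := Walk.cons ham (Walk.cons hmb Walk.nil)
  refine ⟨p, by simp [p, Walk.isPath_def, ham.ne, hmb.ne, hab], ?_, by simp [p]⟩
  have hle : H.dist a b ≤ 2 := dist_le p
  have hne0 : H.dist a b ≠ 0 := (dist_ne_zero_iff_ne_and_reachable).mpr ⟨hab, ⟨p⟩⟩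
  have hne1 : H.dist a b ≠ 1 := fun h => hnadj (dist_eq_one_iff_adj.mp h)
  simp only [p, Walk.length_cons, Walk.length_nil]
  omega

end GeodesicHull

lemma compPrism_adj_inr_inr {V : Type*} {G : SimpleGraph V} {a b : V} :
    (compPrism G).Adj (Sum.inr a) (Sum.inr b) ↔ Gᶜ.Adj a b :=
  Iff.rfl

lemma inr_mem_geoHull_compPrism_of_adj {V : Type*} {G : SimpleGraph V} {S : Set (V ⊕ V)}
    {a b m : V} (ha : Sum.inr a ∈ geoHull (compPrism G) S)
    (hb : Sum.inr b ∈ geoHull (compPrism G) S) (hab : G.Adj a b)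
    (ham : Gᶜ.Adj a m) (hmb : Gᶜ.Adj m b) : Sum.inr m ∈ geoHull (compPrism G) S := by
  refine mem_geoHull_of_inInterval ha hb (inInterval_of_adj_of_adj ?_ ?_ ?_ ?_)
  · simpa using hab.ne
  · rw [compPrism_adj_inr_inr, compl_adj]
    exact fun h => h.2 hab
  · exact compPrism_adj_inr_inr.mpr ham
  · exact compPrism_adj_inr_inr.mpr hmb

theorem stmt8_general {V : Type*} (T : SimpleGraph V) (hT : T.IsTree) (x u v : V)
    (hu : T.Adj x u) (hv : T.Adj x v) (hne : u ≠ v) (hdeg : 2 ≤ vdeg T u) :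
    Set.range Sum.inr ⊆ geoHull (compPrism T) {Sum.inr u, Sum.inr v, Sum.inr x} := by
  have hacyc := hT.isAcyclic
  have hS : ∀ {w}, w = u ∨ w = v ∨ w = x →
      Sum.inr w ∈ geoHull (compPrism T) {Sum.inr u, Sum.inr v, Sum.inr x} := by
    rintro w (rfl | rfl | rfl) <;> exact subset_geoHull (by simp)
  obtain ⟨p, hup, hpx⟩ : ∃ p, p ∈ T.neighborSet u ∧ p ≠ x :=
    Set.exists_ne_of_one_lt_ncard hdeg x
  have hxp : Tᶜ.Adj x p := (compl_adj T x p).mpr ⟨hpx.symm, hacyc.not_adj_of_adj_of_adj hu hup⟩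
  have hp := inr_mem_geoHull_compPrism_of_adj (hS (by simp)) (hS (by simp)) hv hxp
    ((compl_adj T p v).mpr ⟨fun h => hacyc.not_adj_of_adj_of_adj hu (h ▸ hup) hv,
      fun h => hne (hacyc.eq_of_adj_of_adj hpx hup.symm hu.symm h hv.symm)⟩)
  rintro _ ⟨w, rfl⟩
  by_cases hw : w = u ∨ w = v ∨ w = x
  · exact hS hw
  obtain ⟨hwu, hwv, hwx⟩ : w ≠ u ∧ w ≠ v ∧ w ≠ x := by tauto
  by_cases hxw : T.Adj x w
  · refine inr_mem_geoHull_compPrism_of_adj (hS (by simp)) hp hup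
      ((compl_adj T u w).mpr ⟨hwu.symm, hacyc.not_adj_of_adj_of_adj hu.symm hxw⟩)
      ((compl_adj T w p).mpr ⟨fun h => hxp.2 (h ▸ hxw), fun h => hwu ?_⟩)
    exact hacyc.eq_of_adj_of_adj hpx.symm hxw h hu hup
  have hxw' : Tᶜ.Adj x w := (compl_adj T x w).mpr ⟨fun h => hwx h.symm, hxw⟩
  by_cases huw : T.Adj u w
  · exact inr_mem_geoHull_compPrism_of_adj (hS (by simp)) (hS (by simp)) hv hxw'
      ((compl_adj T w v).mpr ⟨hwv, fun h =>
        hne (hacyc.eq_of_adj_of_adj hwx huw.symm hu.symm h hv.symm)⟩)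
  · exact inr_mem_geoHull_compPrism_of_adj (hS (by simp)) (hS (by simp)) hu hxw'
      ((compl_adj T w u).mpr ⟨hwu, fun h => huw h.symm⟩)

theorem stmt8 {V : Type*} [Fintype V] (T : SimpleGraph V) (hT : T.IsTree)
    (hd : graphDiam T = 4) (x u v : V)
    (hc : ∀ y : V, graphEcc T x ≤ graphEcc T y)
    (hu : T.Adj x u) (hv : T.Adj x v) (hne : u ≠ v) (hdeg : 2 ≤ vdeg T u) :
    Set.range Sum.inr ⊆ geoHull (compPrism T) {Sum.inr u, Sum.inr v, Sum.inr x} :=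
  stmt8_general T hT x u v hu hv hne hdeg
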